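/- Let X be a metric space, let r > 0, and let 𝒰' be a cover of X such that for each finite subset σ ⊆ X: σ is contained in some element of 𝒰' iff diam(σ) ≤ r. Then the closed Rips complex Rips̄(X,r) is homotopy equivalent to the nerve N(𝒰'). -/

import Mathlib

open Set

noncomputable section

namespace RipsPaper

universe u v

/-- The closed geometric simplex spanned by the finite vertex set `σ`,
as a set of barycentric-coordinate functions. -/
def simplexCarrier {V : Type u} (σ : Finset V) : Set (V → ℝ) :=
  {f | (∀ v, 0 ≤ f v) ∧ (∀ v, v ∉ σ → f v = 0) ∧ ∑ v ∈ σ, f v = 1}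

/-- The underlying set of the geometric realization of the abstract simplicial complex
whose faces are the finite sets in `K`. -/
def realizationCarrier {V : Type u} (K : Set (Finset V)) : Set (V → ℝ) :=
  {f | ∃ σ ∈ K, f ∈ simplexCarrier σ}

/-- The geometric realization (as a type) of the abstract simplicial complex with face set `K`. -/
structure Realization {V : Type u} (K : Set (Finset V)) : Type u where
  toFun : V → ℝ
  mem : toFun ∈ realizationCarrier K

/-- The inclusion of a closed simplex of the complex into the realization. -/
def simplexIncl {V : Type u} {K : Set (Finset V)} {σ : Finset V} (hσ : σ ∈ K)
    (f : simplexCarrier σ) : Realization K :=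
  ⟨f.1, ⟨σ, hσ, f.2⟩⟩

/-- The weak topology on the geometric realization: the final topology induced by the
inclusions of all closed simplices (each carrying its natural Euclidean topology). -/
instance {V : Type u} (K : Set (Finset V)) : TopologicalSpace (Realization K) :=
  ⨆ σ : {τ : Finset V // τ ∈ K}, TopologicalSpace.coinduced (simplexIncl σ.2) inferInstance

/-- Two spaces are homotopy equivalent. -/
def HomotopyEquivalent (X : Type u) (Y : Type v) [TopologicalSpace X]
    [TopologicalSpace Y] : Prop :=
  Nonempty (ContinuousMap.HomotopyEquiv X Y)

/-- Two (continuous) functions are homotopic. -/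
def FnHomotopic {X : Type u} {Y : Type v} [TopologicalSpace X] [TopologicalSpace Y]
    (f g : X → Y) : Prop :=
  ∃ (hf : Continuous f) (hg : Continuous g),
    (⟨f, hf⟩ : C(X, Y)).Homotopic ⟨g, hg⟩

/-- A function is a homotopy equivalence. -/
def IsHotEquiv {X : Type u} {Y : Type v} [TopologicalSpace X] [TopologicalSpace Y]
    (f : X → Y) : Prop :=
  Continuous f ∧ ∃ g : Y → X, Continuous g ∧
    FnHomotopic (g ∘ f) id ∧ FnHomotopic (f ∘ g) id

/-- The nerve of a collection `𝒰` of subsets of `X`: vertices are the (nonempty) elements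
of `𝒰`, and a finite subcollection spans a simplex iff it has a common point. -/
def nerve {X : Type u} (𝒰 : Set (Set X)) : Set (Finset (Set X)) :=
  {σ | σ.Nonempty ∧ ↑σ ⊆ 𝒰 ∧ (⋂ U ∈ σ, U).Nonempty}

/-- The Vietoris complex of a collection `𝒰` of subsets of `X`: vertices are points of `X`,
and a finite set of points spans a simplex iff it is contained in some element of `𝒰`. -/
def vietoris {X : Type u} (𝒰 : Set (Set X)) : Set (Finset X) :=
  {σ | σ.Nonempty ∧ ∃ U ∈ 𝒰, ↑σ ⊆ U}

/-- The open Rips complex of a metric space at scale `r`. -/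
def rips (X : Type u) [MetricSpace X] (r : ℝ) : Set (Finset X) :=
  {σ | σ.Nonempty ∧ Metric.diam (σ : Set X) < r}

/-- The closed Rips complex of a metric space at scale `r`. -/
def ripsClosed (X : Type u) [MetricSpace X] (r : ℝ) : Set (Finset X) :=
  {σ | σ.Nonempty ∧ Metric.diam (σ : Set X) ≤ r}

/-- The open Rips complex of a subset `A` of a metric space at scale `r`. -/
def ripsOn {X : Type u} [MetricSpace X] (A : Set X) (r : ℝ) : Set (Finset X) :=
  {σ | σ.Nonempty ∧ ↑σ ⊆ A ∧ Metric.diam (σ : Set X) < r}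

/-- The (open) Čech complex of a metric space at scale `r`. -/
def cech (X : Type u) [MetricSpace X] (r : ℝ) : Set (Finset X) :=
  {σ | σ.Nonempty ∧ (⋂ x ∈ σ, Metric.ball x r).Nonempty}

/-- `𝒰` is a cover of `X`. -/
def IsCover {X : Type u} (𝒰 : Set (Set X)) : Prop := ⋃₀ 𝒰 = univ

/-- A collection of subsets is good if every nonempty intersection of a finite
subcollection is contractible. -/
def IsGoodCover {X : Type u} [TopologicalSpace X] (𝒰 : Set (Set X)) : Prop :=
  ∀ σ : Finset (Set X), ↑σ ⊆ 𝒰 → σ.Nonempty → (⋂ U ∈ σ, U).Nonempty →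
    ContractibleSpace ↥(⋂ U ∈ σ, U)

/-- A cover is numerable if it admits a locally finite partition of unity subordinated
to it. -/
def IsNumerable {X : Type u} [TopologicalSpace X] (𝒰 : Set (Set X)) : Prop :=
  ∃ (ι : Type u) (ρ : PartitionOfUnity ι X Set.univ) (g : ι → Set X),
    (∀ i, g i ∈ 𝒰) ∧ ρ.IsSubordinate g

/-- `iU` is the canonical map `X → N(𝒰)` determined (via barycentric coordinates)
by the partition of unity `ρ`, subordinated to `𝒰` via the assignment `g`. -/
def IsNerveMap {X : Type u} [TopologicalSpace X] (𝒰 : Set (Set X)) {ι : Type v}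
    (ρ : PartitionOfUnity ι X Set.univ) (g : ι → Set X)
    (iU : X → Realization (nerve 𝒰)) : Prop :=
  ∀ (x : X) (U : Set X), (iU x).toFun U = ∑ᶠ i ∈ {i | g i = U}, ρ i x

/-- `Φ` is the map of geometric realizations induced by the vertex map `h`
(pushforward of barycentric coordinates). -/
def IsInducedMap {V : Type u} {W : Type v} {K : Set (Finset V)} {L : Set (Finset W)}
    (h : V → W) (Φ : Realization K → Realization L) : Prop :=
  ∀ (p : Realization K) (w : W), (Φ p).toFun w = ∑ᶠ v ∈ {v | h v = w}, p.toFun v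

/-- `Φ` is the inclusion of the realization of a subcomplex `K ⊆ L`. -/
def IsSubcomplexInclusion {V : Type u} {K L : Set (Finset V)}
    (Φ : Realization K → Realization L) : Prop :=
  ∀ p, (Φ p).toFun = p.toFun

end RipsPaper

/-!
Under the hypothesis on `𝒰'` the closed Rips complex is the Vietoris complex of `𝒰'`, and the
Vietoris complex and the nerve of `𝒰'` are the two Dowker complexes `D(R)`, `D(Rᵀ)` of the
membership relation `x ∈ U`; Dowker duality makes them homotopy equivalent.

Dowker duality is proved through barycentric subdivision. The barycentre map `|sd K| → |K|` is a
homeomorphism: a point of `|K|` is decoded into a chain of faces by repeatedly splitting off a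
multiple of the barycentre of its support. Choosing a common witness for each simplex of `D(R)`
gives a simplicial map `sd D(R) → D(Rᵀ)`, hence a map `|D(R)| → |D(Rᵀ)|`. Composing the maps in
both directions and subdividing once more, the composite is contiguous to a vertex map sending a
chain of chains to a common vertex, and that map is homotopic to the double barycentre map.
-/

namespace RipsPaper

open Function Finset

variable {V W : Type*}

namespace FnHomotopic

variable {X Y Z : Type*} [TopologicalSpace X] [TopologicalSpace Y] [TopologicalSpace Z]

lemma trans {f g h : X → Y} (hfg : FnHomotopic f g) (hgh : FnHomotopic g h) :
    FnHomotopic f h :=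
  let ⟨hf, _, H₁⟩ := hfg
  let ⟨_, hh, H₂⟩ := hgh
  ⟨hf, hh, H₁.trans H₂⟩

lemma comp_left {f g : X → Y} (hfg : FnHomotopic f g) {e : Y → Z} (he : Continuous e) :
    FnHomotopic (e ∘ f) (e ∘ g) :=
  let ⟨hf, hg, H⟩ := hfg
  ⟨he.comp hf, he.comp hg, (ContinuousMap.Homotopic.refl ⟨e, he⟩).comp H⟩

lemma comp_right {f g : Y → Z} (hfg : FnHomotopic f g) {e : X → Y} (he : Continuous e) :
    FnHomotopic (f ∘ e) (g ∘ e) :=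
  let ⟨hf, hg, H⟩ := hfg
  ⟨hf.comp he, hg.comp he, H.comp (ContinuousMap.Homotopic.refl ⟨e, he⟩)⟩

lemma of_comp_homeomorph {f g : Y → Z} (e : X ≃ₜ Y) (hfg : FnHomotopic (f ∘ e) (g ∘ e)) :
    FnHomotopic f g := by
  simpa [comp_assoc] using hfg.comp_right e.symm.continuous

end FnHomotopic

lemma IsHotEquiv.homotopyEquivalent {X Y : Type*} [TopologicalSpace X] [TopologicalSpace Y]
    {f : X → Y} (hf : IsHotEquiv f) : HomotopyEquivalent X Y :=
  let ⟨hfc, g, hgc, ⟨_, _, H₁⟩, ⟨_, _, H₂⟩⟩ := hf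
  ⟨⟨⟨f, hfc⟩, ⟨g, hgc⟩, H₁, H₂⟩⟩

section Simplex

variable {σ : Finset V}

lemma support_subset_of_mem_simplexCarrier {f : V → ℝ} (hf : f ∈ simplexCarrier σ) :
    support f ⊆ σ :=
  fun v hv => by_contra fun hvσ => hv (hf.2.1 v hvσ)

lemma nonempty_of_mem_simplexCarrier {f : V → ℝ} (hf : f ∈ simplexCarrier σ) : σ.Nonempty :=
  nonempty_of_sum_ne_zero (hf.2.2 ▸ one_ne_zero)

lemma ne_zero_iff_of_mem_simplexCarrier {f : V → ℝ} (hf : f ∈ simplexCarrier σ) (v : V) :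
    f v ≠ 0 ↔ v ∈ σ.filter (f · ≠ 0) :=
  ⟨fun h => mem_filter.2 ⟨by_contra fun hv => h (hf.2.1 v hv), h⟩, fun h => (mem_filter.1 h).2⟩

lemma mem_simplexCarrier_filter_ne_zero {f : V → ℝ} (hf : f ∈ simplexCarrier σ) :
    f ∈ simplexCarrier (σ.filter (f · ≠ 0)) :=
  ⟨hf.1, fun v hv => not_not.1 ((ne_zero_iff_of_mem_simplexCarrier hf v).not.2 hv),
    by rw [sum_filter_ne_zero, hf.2.2]⟩

lemma simplexCarrier_mono {τ : Finset V} (hστ : σ ⊆ τ) : simplexCarrier σ ⊆ simplexCarrier τ :=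
  fun _ ⟨h0, hz, hs⟩ => ⟨h0, fun v hv => hz v fun hvσ => hv (hστ hvσ),
    hs ▸ (sum_subset hστ fun v _ hvσ => hz v hvσ).symm⟩

lemma convex_simplexCarrier (σ : Finset V) : Convex ℝ (simplexCarrier σ) := by
  rintro f ⟨hf0, hfz, hfs⟩ g ⟨hg0, hgz, hgs⟩ a b ha hb hab
  refine ⟨fun v => ?_, fun v hv => ?_, ?_⟩
  · simp only [Pi.add_apply, Pi.smul_apply, smul_eq_mul]
    exact add_nonneg (mul_nonneg ha (hf0 v)) (mul_nonneg hb (hg0 v))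
  · simp [hfz v hv, hgz v hv]
  · simp [sum_add_distrib, ← mul_sum, hfs, hgs, hab]

lemma isClosed_simplexCarrier (σ : Finset V) : IsClosed (simplexCarrier σ) := by
  simp only [simplexCarrier, ofPred_and, ofPred_forall]
  exact (isClosed_iInter fun v => isClosed_le continuous_const (continuous_apply v)).inter
    ((isClosed_iInter fun v => isClosed_iInter fun _ =>
      isClosed_eq (continuous_apply v) continuous_const).inter
    (isClosed_eq (continuous_finsetSum _ fun v _ => continuous_apply v) continuous_const))

lemma isCompact_simplexCarrier (σ : Finset V) : IsCompact (simplexCarrier σ) := by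
  refine (isCompact_univ_pi fun _ => isCompact_Icc (a := (0 : ℝ)) (b := 1)).of_isClosed_subset
    (isClosed_simplexCarrier σ) fun f ⟨h0, hz, hs⟩ v _ => ⟨h0 v, ?_⟩
  by_cases hv : v ∈ σ
  · exact hs ▸ single_le_sum (fun w _ => h0 w) hv
  · simp [hz v hv]

end Simplex

namespace Realization

variable {K : Set (Finset V)} {L : Set (Finset W)}

@[ext] lemma ext {p q : Realization K} (h : p.toFun = q.toFun) : p = q := by
  cases p; cases q; simpa using h

lemma continuous_simplexIncl {σ : Finset V} (hσ : σ ∈ K) : Continuous (simplexIncl hσ) :=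
  continuous_iff_coinduced_le.2 <| le_iSup (fun τ : {τ // τ ∈ K} =>
    TopologicalSpace.coinduced (simplexIncl τ.2) inferInstance) ⟨σ, hσ⟩

lemma continuous_iff {Y : Type*} [TopologicalSpace Y] {F : Realization K → Y} :
    Continuous F ↔ ∀ σ (hσ : σ ∈ K), Continuous (F ∘ simplexIncl hσ) :=
  ⟨fun hF _ hσ => hF.comp (continuous_simplexIncl hσ),
    fun h => continuous_iSup_dom.2 fun τ => continuous_coinduced_dom.2 (h τ.1 τ.2)⟩

lemma isClosed_iff {s : Set (Realization K)} :
    IsClosed s ↔ ∀ σ (hσ : σ ∈ K), IsClosed (simplexIncl hσ ⁻¹' s) := by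
  refine ⟨fun hs _ hσ => hs.preimage (continuous_simplexIncl hσ), fun h => ?_⟩
  rw [← isOpen_compl_iff]
  exact isOpen_iSup_iff.2 fun τ => isOpen_coinduced.2 (h τ.1 τ.2).isOpen_compl

lemma continuous_toFun : Continuous (toFun : Realization K → V → ℝ) :=
  continuous_iff.2 fun _ _ => continuous_subtype_val

lemma isEmpty_of_eq_empty (hK : K = ∅) : IsEmpty (Realization K) :=
  ⟨fun p => by obtain ⟨σ, hσ, -⟩ := p.mem; simp [hK] at hσ⟩

end Realization

open Realization

def simplexSet (K : Set (Finset V)) (σ : Finset V) : Set (Realization K) :=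
  toFun ⁻¹' simplexCarrier σ

section SimplexSet

variable {K : Set (Finset V)} {L : Set (Finset W)}

lemma simplexSet_eq_range {σ : Finset V} (hσ : σ ∈ K) :
    simplexSet K σ = range (simplexIncl hσ) :=
  Set.ext fun p => ⟨fun hp => ⟨⟨p.toFun, hp⟩, rfl⟩, by rintro ⟨f, rfl⟩; exact f.2⟩

lemma isCompact_simplexSet {σ : Finset V} (hσ : σ ∈ K) : IsCompact (simplexSet K σ) := by
  have := isCompact_iff_compactSpace.1 (isCompact_simplexCarrier σ)
  exact simplexSet_eq_range hσ ▸ isCompact_range (continuous_simplexIncl hσ)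

lemma isClosed_simplexSet (K : Set (Finset V)) (τ : Finset V) : IsClosed (simplexSet K τ) :=
  isClosed_iff.2 fun _ _ => (isClosed_simplexCarrier τ).preimage continuous_subtype_val

lemma continuous_of_forall_mem_simplexSet {Y : Type*} [TopologicalSpace Y]
    {F : Y → Realization L} {τ : Finset W} (hτ : τ ∈ L) (hF : ∀ y, F y ∈ simplexSet L τ)
    (hc : Continuous fun y => (F y).toFun) : Continuous F :=
  (continuous_simplexIncl hτ).comp (hc.subtype_mk hF)

lemma isClosedMap_of_isCompact_preimage_simplexSet {Y : Type*} [TopologicalSpace Y]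
    {F : Y → Realization L} (hF : Continuous F)
    (hcpt : ∀ τ ∈ L, IsCompact (F ⁻¹' simplexSet L τ)) : IsClosedMap F := by
  refine fun C hC => isClosed_iff.2 fun τ hτ => ?_
  have hT : IsCompact (toFun '' (F '' (C ∩ F ⁻¹' simplexSet L τ))) :=
    ((hcpt τ hτ).inter_left hC |>.image hF).image continuous_toFun
  convert hT.isClosed.preimage continuous_subtype_val using 1
  ext x
  constructor
  · rintro ⟨y, hyC, hyx⟩
    refine ⟨F y, ⟨y, ⟨hyC, ?_⟩, rfl⟩, by rw [hyx]; rfl⟩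
    show (F y).toFun ∈ simplexCarrier τ
    rw [hyx]
    exact x.2
  · rintro ⟨q, ⟨y, hy, rfl⟩, hqx⟩
    exact ⟨y, hy.1, Realization.ext hqx⟩

end SimplexSet

section Maps

variable {K : Set (Finset V)} {L : Set (Finset W)}

lemma fnHomotopic_of_forall_mem_simplexSet {F G : Realization K → Realization L}
    (hF : Continuous F) (hG : Continuous G)
    (hFG : ∀ σ ∈ K, ∃ τ ∈ L, ∀ p ∈ simplexSet K σ, F p ∈ simplexSet L τ ∧ G p ∈ simplexSet L τ) :
    FnHomotopic F G := by
  let line (p : Realization K) (t : unitInterval) : W → ℝ :=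
    (1 - (t : ℝ)) • (F p).toFun + (t : ℝ) • (G p).toFun
  have hline : ∀ σ ∈ K, ∃ τ ∈ L, ∀ p ∈ simplexSet K σ, ∀ t, line p t ∈ simplexCarrier τ :=
    fun σ hσ => let ⟨τ, hτ, h⟩ := hFG σ hσ
      ⟨τ, hτ, fun p hp t => convex_simplexCarrier τ (h p hp).1 (h p hp).2
        (sub_nonneg.2 t.2.2) t.2.1 (sub_add_cancel 1 _)⟩
  let H (p : Realization K) (t : unitInterval) : Realization L :=
    ⟨line p t, let ⟨σ, hσ, hp⟩ := p.mem; let ⟨τ, hτ, h⟩ := hline σ hσ; ⟨τ, hτ, h p hp t⟩⟩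
  have hHp : ∀ p, Continuous (H p) := fun p =>
    let ⟨σ, hσ, hp⟩ := p.mem
    let ⟨τ, hτ, h⟩ := hline σ hσ
    continuous_of_forall_mem_simplexSet hτ (h p hp) (by simp only [H, line]; fun_prop)
  -- `Realization K × I` does not carry the weak topology, so continuity is checked on the
  -- curried map and transported back by `uncurry` (`I` is locally compact).
  have hH : Continuous fun p => (⟨H p, hHp p⟩ : C(unitInterval, Realization L)) := by
    refine continuous_iff.2 fun σ hσ => ?_
    obtain ⟨τ, hτ, h⟩ := hline σ hσ
    have hFσ : Continuous fun x : simplexCarrier σ => (F (simplexIncl hσ x)).toFun :=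
      continuous_toFun.comp (hF.comp (continuous_simplexIncl hσ))
    have hGσ : Continuous fun x : simplexCarrier σ => (G (simplexIncl hσ x)).toFun :=
      continuous_toFun.comp (hG.comp (continuous_simplexIncl hσ))
    have hc : Continuous fun x : simplexCarrier σ × unitInterval => H (simplexIncl hσ x.1) x.2 :=
      continuous_of_forall_mem_simplexSet hτ (fun x => h _ x.1.2 x.2)
        (((continuous_const.sub (continuous_subtype_val.comp continuous_snd)).smul
          (hFσ.comp continuous_fst)).add
          ((continuous_subtype_val.comp continuous_snd).smul (hGσ.comp continuous_fst)))
    exact (ContinuousMap.curry ⟨_, hc⟩).continuous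
  refine ⟨hF, hG, ⟨{
    toFun := fun x => H x.2 x.1
    continuous_toFun := (ContinuousMap.uncurry ⟨_, hH⟩).continuous.comp continuous_swap
    map_zero_left := fun p => Realization.ext (by simp [H, line])
    map_one_left := fun p => Realization.ext (by simp [H, line]) }⟩⟩

end Maps

section AffineMaps

def affineExtend (φ : V → W → ℝ) (f : V → ℝ) : W → ℝ := ∑ᶠ v, f v • φ v

variable {φ : V → W → ℝ} {σ : Finset V} {f : V → ℝ}

lemma affineExtend_eq_sum (hf : support f ⊆ σ) : affineExtend φ f = ∑ v ∈ σ, f v • φ v :=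
  finsum_eq_sum_of_support_subset _ fun v hv => hf fun h0 => hv (by simp [h0])

lemma affineExtend_mem (hf : f ∈ simplexCarrier σ) {τ : Finset W}
    (hφ : ∀ v ∈ σ, φ v ∈ simplexCarrier τ) : affineExtend φ f ∈ simplexCarrier τ := by
  rw [affineExtend_eq_sum (support_subset_of_mem_simplexCarrier hf)]
  exact (convex_simplexCarrier τ).sum_mem (fun v _ => hf.1 v) hf.2.2 hφ

lemma continuousOn_affineExtend : ContinuousOn (affineExtend φ) (simplexCarrier σ) :=
  (continuous_finsetSum σ fun v _ => (continuous_apply v).smul continuous_const).continuousOn.congr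
    fun _ hf => affineExtend_eq_sum (support_subset_of_mem_simplexCarrier hf)

variable {K : Set (Finset V)} {L : Set (Finset W)}

def Realization.affineMap (φ : V → W → ℝ)
    (hφ : ∀ σ ∈ K, ∃ τ ∈ L, ∀ v ∈ σ, φ v ∈ simplexCarrier τ) (p : Realization K) :
    Realization L where
  toFun := affineExtend φ p.toFun
  mem :=
    let ⟨σ, hσ, hp⟩ := p.mem
    let ⟨τ, hτ, h⟩ := hφ σ hσ
    ⟨τ, hτ, affineExtend_mem hp h⟩

variable {hφ : ∀ σ ∈ K, ∃ τ ∈ L, ∀ v ∈ σ, φ v ∈ simplexCarrier τ}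

lemma Realization.continuous_affineMap : Continuous (affineMap φ hφ) :=
  continuous_iff.2 fun σ hσ =>
    let ⟨_, hτ, h⟩ := hφ σ hσ
    continuous_of_forall_mem_simplexSet hτ (fun x => affineExtend_mem x.2 h)
      (continuousOn_affineExtend.comp_continuous continuous_subtype_val Subtype.property)

lemma Realization.affineMap_mem_simplexSet {p : Realization K} (hp : p ∈ simplexSet K σ)
    {τ : Finset W} (hφτ : ∀ v ∈ σ, φ v ∈ simplexCarrier τ) :
    affineMap φ hφ p ∈ simplexSet L τ :=
  affineExtend_mem hp hφτ

end AffineMaps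

section VertexMaps

variable [DecidableEq W] {K : Set (Finset V)} {L : Set (Finset W)}

def IsSimplicialMap (K : Set (Finset V)) (L : Set (Finset W)) (h : V → W) : Prop :=
  ∀ σ ∈ K, σ.image h ∈ L

lemma single_mem_simplexCarrier {w : W} {τ : Finset W} (hw : w ∈ τ) :
    Pi.single w 1 ∈ simplexCarrier τ :=
  ⟨(Pi.single_nonneg.2 zero_le_one : (0 : W → ℝ) ≤ Pi.single w 1),
    fun w' hw' => Pi.single_eq_of_ne (ne_of_mem_of_not_mem hw hw').symm _,
    by simp [hw]⟩

def Realization.vertexMap (h : V → W) (hh : IsSimplicialMap K L h) :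
    Realization K → Realization L :=
  affineMap (fun v => Pi.single (h v) 1) fun σ hσ =>
    ⟨σ.image h, hh σ hσ, fun _ hv => single_mem_simplexCarrier (mem_image_of_mem h hv)⟩

variable {h : V → W} {hh : IsSimplicialMap K L h}

lemma Realization.continuous_vertexMap : Continuous (vertexMap h hh) :=
  continuous_affineMap

lemma Realization.vertexMap_mem_simplexSet {σ : Finset V} {p : Realization K}
    (hp : p ∈ simplexSet K σ) {τ : Finset W} (hστ : ∀ v ∈ σ, h v ∈ τ) :
    vertexMap h hh p ∈ simplexSet L τ :=
  affineMap_mem_simplexSet hp fun v hv => single_mem_simplexCarrier (hστ v hv)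

end VertexMaps

structure IsSimplicialComplex (K : Set (Finset V)) : Prop where
  nonempty : ∀ σ ∈ K, σ.Nonempty
  mem_of_subset : ∀ σ ∈ K, ∀ τ ⊆ σ, τ.Nonempty → τ ∈ K

/-- Barycentric subdivision. -/
def sd (K : Set (Finset V)) : Set (Finset (Finset V)) :=
  {C | C.Nonempty ∧ ↑C ⊆ K ∧ IsChain (· ⊆ ·) (C : Set (Finset V))}

lemma isSimplicialComplex_sd (K : Set (Finset V)) : IsSimplicialComplex (sd K) where
  nonempty _ hC := hC.1
  mem_of_subset _ hC _ hDC hD :=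
    ⟨hD, (coe_subset.2 hDC).trans hC.2.1, hC.2.2.mono (coe_subset.2 hDC)⟩

section Chains

variable {C : Finset (Finset V)}

lemma exists_greatest_of_isChain (hne : C.Nonempty) (hC : IsChain (· ⊆ ·) (C : Set (Finset V))) :
    ∃ M ∈ C, ∀ τ ∈ C, τ ⊆ M := by
  obtain ⟨M, hM, hmax⟩ := C.exists_max_image card hne
  refine ⟨M, hM, fun τ hτ => (hC.total hτ hM).elim id fun h => ?_⟩
  exact (eq_of_subset_of_card_le h (hmax τ hτ)).ge

lemma exists_least_of_isChain (hne : C.Nonempty) (hC : IsChain (· ⊆ ·) (C : Set (Finset V))) :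
    ∃ m ∈ C, ∀ τ ∈ C, m ⊆ τ := by
  obtain ⟨m, hm, hmin⟩ := C.exists_min_image card hne
  refine ⟨m, hm, fun τ hτ => (hC.total hm hτ).elim id fun h => ?_⟩
  exact (eq_of_subset_of_card_le h (hmin τ hτ)).ge

end Chains

section Barycenter

variable {τ : Finset V}

def barycenter (τ : Finset V) : V → ℝ := (τ : Set V).indicator fun _ => (#τ : ℝ)⁻¹

lemma barycenter_nonneg (τ : Finset V) (v : V) : 0 ≤ barycenter τ v :=
  indicator_nonneg (fun _ _ => by positivity) v

lemma barycenter_of_mem {v : V} (hv : v ∈ τ) : barycenter τ v = (#τ : ℝ)⁻¹ :=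
  indicator_of_mem (mem_coe.2 hv) _

lemma barycenter_of_notMem {v : V} (hv : v ∉ τ) : barycenter τ v = 0 :=
  indicator_of_notMem (mem_coe.not.2 hv) _

lemma barycenter_pos {v : V} (hv : v ∈ τ) : 0 < barycenter τ v := by
  rw [barycenter_of_mem hv]
  exact inv_pos.2 (Nat.cast_pos.2 (card_pos.2 ⟨v, hv⟩))

lemma barycenter_mem_simplexCarrier (hτ : τ.Nonempty) : barycenter τ ∈ simplexCarrier τ := by
  refine ⟨barycenter_nonneg τ, fun v => barycenter_of_notMem, ?_⟩
  rw [sum_congr rfl fun v => barycenter_of_mem, sum_const, nsmul_eq_mul,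
    mul_inv_cancel₀ (Nat.cast_ne_zero.2 hτ.card_pos.ne')]

end Barycenter

lemma barycenter_mem_of_mem_sd {K : Set (Finset V)} (hK : IsSimplicialComplex K)
    {C : Finset (Finset V)} (hC : C ∈ sd K) {τ : Finset V} (hCτ : ∀ ρ ∈ C, ρ ⊆ τ) :
    ∀ ρ ∈ C, barycenter ρ ∈ simplexCarrier τ := fun ρ hρ =>
  simplexCarrier_mono (hCτ ρ hρ) (barycenter_mem_simplexCarrier (hK.nonempty ρ (hC.2.1 hρ)))

def baryMap {K : Set (Finset V)} (hK : IsSimplicialComplex K) :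
    Realization (sd K) → Realization K :=
  Realization.affineMap barycenter fun _ hC =>
    let ⟨M, hM, hmax⟩ := exists_greatest_of_isChain hC.1 hC.2.2
    ⟨M, hC.2.1 hM, barycenter_mem_of_mem_sd hK hC hmax⟩

lemma baryMap_mem_simplexSet {K : Set (Finset V)} (hK : IsSimplicialComplex K)
    {C : Finset (Finset V)} {p : Realization (sd K)} (hp : p ∈ simplexSet (sd K) C)
    {τ : Finset V} (hCτ : ∀ ρ ∈ C, barycenter ρ ∈ simplexCarrier τ) :
    baryMap hK p ∈ simplexSet K τ :=
  affineMap_mem_simplexSet hp hCτ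

lemma sum_erase_update_zero_smul {ι E : Type*} [DecidableEq ι] [AddCommGroup E] [Module ℝ E]
    {s : Finset ι} {i : ι} (hi : i ∈ s) (g : ι → ℝ) (φ : ι → E) :
    ∑ j ∈ s.erase i, update g i 0 j • φ j = ∑ j ∈ s, g j • φ j - g i • φ i := by
  rw [← sum_erase_eq_sub hi]
  exact sum_congr rfl fun j hj => by rw [update_of_ne (ne_of_mem_erase hj)]

lemma sum_insert_update_smul {ι E : Type*} [DecidableEq ι] [AddCommGroup E] [Module ℝ E]
    {s : Finset ι} {i : ι} (hi : i ∉ s) (g : ι → ℝ) (c : ℝ) (φ : ι → E) :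
    ∑ j ∈ insert i s, update g i c j • φ j = c • φ i + ∑ j ∈ s, g j • φ j := by
  rw [sum_insert hi, update_self]
  congr 1
  exact sum_congr rfl fun j hj => by rw [update_of_ne (ne_of_mem_of_not_mem hj hi)]

section ChainWeights

/-- `g` is an unnormalised point of the open simplex of `sd` spanned by the chain `D`. -/
structure IsChainWeight (g : Finset V → ℝ) (D : Finset (Finset V)) : Prop where
  nonneg : ∀ τ, 0 ≤ g τ
  ne_zero_iff : ∀ τ, g τ ≠ 0 ↔ τ ∈ D
  nonempty : ∀ τ ∈ D, τ.Nonempty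
  isChain : IsChain (· ⊆ ·) (D : Set (Finset V))

variable {g g' : Finset V → ℝ} {D D' : Finset (Finset V)}

namespace IsChainWeight

lemma support_subset (hg : IsChainWeight g D) : support g ⊆ D :=
  fun τ hτ => (hg.ne_zero_iff τ).1 hτ

lemma eq_zero_of_notMem (hg : IsChainWeight g D) {τ : Finset V} (hτ : τ ∉ D) : g τ = 0 :=
  not_not.1 ((hg.ne_zero_iff τ).not.2 hτ)

lemma pos (hg : IsChainWeight g D) {τ : Finset V} (hτ : τ ∈ D) : 0 < g τ :=
  (hg.nonneg τ).lt_of_ne ((hg.ne_zero_iff τ).2 hτ).symm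

lemma mul_barycenter_le_sum (hg : IsChainWeight g D) {ρ : Finset V} (hρ : ρ ∈ D) (v : V) :
    g ρ * barycenter ρ v ≤ (∑ τ ∈ D, g τ • barycenter τ) v := by
  rw [Finset.sum_apply]
  exact single_le_sum (f := fun τ => g τ * barycenter τ v)
    (fun τ _ => mul_nonneg (hg.nonneg τ) (barycenter_nonneg τ v)) hρ

lemma sum_pos (hg : IsChainWeight g D) {ρ : Finset V} (hρ : ρ ∈ D) {v : V} (hv : v ∈ ρ) :
    0 < (∑ τ ∈ D, g τ • barycenter τ) v :=
  (mul_pos (hg.pos hρ) (barycenter_pos hv)).trans_le (hg.mul_barycenter_le_sum hρ v)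

lemma sum_ne_zero_iff (hg : IsChainWeight g D) {M : Finset V} (hM : M ∈ D)
    (hmax : ∀ τ ∈ D, τ ⊆ M) (v : V) : (∑ τ ∈ D, g τ • barycenter τ) v ≠ 0 ↔ v ∈ M := by
  refine ⟨fun h => by_contra fun hv => h ?_, fun hv => (hg.sum_pos hM hv).ne'⟩
  rw [Finset.sum_apply]
  exact sum_eq_zero fun τ hτ => by
    simp [barycenter_of_notMem fun hvτ => hv (hmax τ hτ hvτ)]

/-- The minimum is attained at a vertex of `M` lying in no smaller simplex of the chain. -/
lemma isLeast_sum (hg : IsChainWeight g D) {M : Finset V} (hM : M ∈ D)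
    (hmax : ∀ τ ∈ D, τ ⊆ M) :
    IsLeast ((∑ τ ∈ D, g τ • barycenter τ) '' M) (g M * (#M : ℝ)⁻¹) := by
  classical
  refine ⟨?_, ?_⟩
  · obtain ⟨v, hvM, hv⟩ : ∃ v ∈ M, ∀ τ ∈ D.erase M, v ∉ τ := by
      rcases (D.erase M).eq_empty_or_nonempty with he | hne
      · obtain ⟨v, hv⟩ := hg.nonempty M hM
        exact ⟨v, hv, by simp [he]⟩
      obtain ⟨M₂, hM₂, hmax₂⟩ :=
        exists_greatest_of_isChain hne (hg.isChain.mono (coe_subset.2 (erase_subset M D)))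
      obtain ⟨v, hvM, hvM₂⟩ := exists_of_ssubset <| ssubset_iff_subset_ne.2
        ⟨hmax M₂ (mem_of_mem_erase hM₂), ne_of_mem_erase hM₂⟩
      exact ⟨v, hvM, fun τ hτ hvτ => hvM₂ (hmax₂ τ hτ hvτ)⟩
    refine ⟨v, hvM, ?_⟩
    rw [Finset.sum_apply, sum_eq_single_of_mem M hM fun τ hτ hτM => ?_]
    · simp [barycenter_of_mem hvM]
    · simp [barycenter_of_notMem (hv τ (mem_erase.2 ⟨hτM, hτ⟩))]
  · rintro _ ⟨v, hv, rfl⟩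
    exact barycenter_of_mem hv ▸ hg.mul_barycenter_le_sum hM v

lemma erase [DecidableEq V] (hg : IsChainWeight g D) (M : Finset V) :
    IsChainWeight (update g M 0) (D.erase M) where
  nonneg τ := by
    rcases eq_or_ne τ M with rfl | h
    · simp
    · simpa [h] using hg.nonneg τ
  ne_zero_iff τ := by
    rcases eq_or_ne τ M with rfl | h
    · simp
    · simpa [h] using hg.ne_zero_iff τ
  nonempty τ hτ := hg.nonempty τ (mem_of_mem_erase hτ)
  isChain := hg.isChain.mono (coe_subset.2 (erase_subset M D))

lemma eq_zero_of_sum_eq_zero (hg : IsChainWeight g D)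
    (h : ∑ τ ∈ D, g τ • barycenter τ = 0) : g = 0 := by
  rcases D.eq_empty_or_nonempty with rfl | hne
  · exact funext fun τ => hg.eq_zero_of_notMem (notMem_empty τ)
  obtain ⟨M, hM, -⟩ := exists_greatest_of_isChain hne hg.isChain
  obtain ⟨v, hv⟩ := hg.nonempty M hM
  exact absurd (congrFun h v) (hg.sum_pos hM hv).ne'

theorem eq_of_sum_eq (hg : IsChainWeight g D) (hg' : IsChainWeight g' D')
    (h : ∑ τ ∈ D, g τ • barycenter τ = ∑ τ ∈ D', g' τ • barycenter τ) : g = g' := by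
  classical
  induction D using Finset.strongInduction generalizing g g' D' with
  | H D ih =>
  rcases D.eq_empty_or_nonempty with rfl | hne
  · rw [hg.eq_zero_of_sum_eq_zero rfl, hg'.eq_zero_of_sum_eq_zero (by simpa using h.symm)]
  have hne' : D'.Nonempty := by
    refine Finset.nonempty_iff_ne_empty.2 fun hD' => ?_
    obtain ⟨M, hM, -⟩ := exists_greatest_of_isChain hne hg.isChain
    exact (hg.pos hM).ne' (congrFun (hg.eq_zero_of_sum_eq_zero (by simp [h, hD'])) M)
  obtain ⟨M, hM, hmax⟩ := exists_greatest_of_isChain hne hg.isChain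
  obtain ⟨M', hM', hmax'⟩ := exists_greatest_of_isChain hne' hg'.isChain
  obtain rfl : M = M' := by
    ext v
    rw [← hg.sum_ne_zero_iff hM hmax, ← hg'.sum_ne_zero_iff hM' hmax', h]
  have htop : g M = g' M := by
    have := (hg.isLeast_sum hM hmax).unique (h ▸ hg'.isLeast_sum hM' hmax')
    exact mul_right_cancel₀ (inv_ne_zero (Nat.cast_ne_zero.2 (hg.nonempty M hM).card_pos.ne'))
      this
  have hrest := ih _ (erase_ssubset hM) (hg.erase M) (hg'.erase M) (by
    rw [sum_erase_update_zero_smul hM, sum_erase_update_zero_smul hM', h, htop])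
  funext τ
  rcases eq_or_ne τ M with rfl | hτ
  · exact htop
  · simpa [hτ] using congrFun hrest τ

lemma update_insert [DecidableEq V] (hg : IsChainWeight g D) {s : Finset V} (hs : s.Nonempty)
    {c : ℝ} (hc : 0 < c) (hD : ∀ τ ∈ D, τ ⊂ s) : IsChainWeight (update g s c) (insert s D) where
  nonneg τ := by
    rcases eq_or_ne τ s with rfl | h
    · simpa using hc.le
    · simpa [h] using hg.nonneg τ
  ne_zero_iff τ := by
    rcases eq_or_ne τ s with rfl | h
    · simpa using hc.ne'
    · simpa [h] using hg.ne_zero_iff τ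
  nonempty τ hτ := (mem_insert.1 hτ).elim (· ▸ hs) (hg.nonempty τ)
  isChain := by
    rw [coe_insert]
    exact hg.isChain.insert fun τ hτ _ => .inr (hD τ hτ).subset

end IsChainWeight

lemma smul_barycenter_eq_indicator {s : Finset V} (hs : s.Nonempty) (m : ℝ) :
    (m * #s) • barycenter s = (s : Set V).indicator fun _ => m := by
  funext v
  by_cases hv : v ∈ s
  · rw [Pi.smul_apply, barycenter_of_mem hv, indicator_of_mem (mem_coe.2 hv), smul_eq_mul,
      mul_assoc, mul_inv_cancel₀ (Nat.cast_ne_zero.2 hs.card_pos.ne'), mul_one]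
  · simp [barycenter_of_notMem hv, hv]

/-- Split off `#s` times the least coordinate on `s` as a multiple of the barycenter of `s`, and
recurse on the smaller support. -/
theorem exists_isChainWeight_sum_eq (s : Finset V) {f : V → ℝ} (hf0 : ∀ v, 0 ≤ f v)
    (hfs : ∀ v, f v ≠ 0 ↔ v ∈ s) :
    ∃ g D, IsChainWeight g D ∧ (∀ τ ∈ D, τ ⊆ s) ∧ ∑ τ ∈ D, g τ • barycenter τ = f := by
  classical
  induction s using Finset.strongInduction generalizing f with
  | H s ih =>
  rcases s.eq_empty_or_nonempty with rfl | hs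
  · refine ⟨0, ∅, ⟨fun _ => le_rfl, by simp, by simp, by simp⟩, by simp, ?_⟩
    funext v
    exact (not_not.1 ((hfs v).not.2 (Finset.notMem_empty v))).symm
  obtain ⟨v₀, hv₀, hmin⟩ := s.exists_min_image f hs
  have hm : 0 < f v₀ := (hf0 v₀).lt_of_ne ((hfs v₀).2 hv₀).symm
  set f' := f - (s : Set V).indicator fun _ => f v₀
  have hf'0 : ∀ v, 0 ≤ f' v := fun v => by
    by_cases hv : v ∈ s
    · simpa [f', hv] using hmin v hv
    · simp [f', hv, not_not.1 ((hfs v).not.2 hv)]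
  have hf's : ∀ v, f' v ≠ 0 ↔ v ∈ s.filter (f · ≠ f v₀) := fun v => by
    by_cases hv : v ∈ s
    · simp [f', hv, sub_eq_zero]
    · simp [f', hv, not_not.1 ((hfs v).not.2 hv)]
  obtain ⟨g', D', hg', hD's, hsum'⟩ :=
    ih _ (filter_ssubset.2 ⟨v₀, hv₀, by simp⟩) hf'0 hf's
  have hD'ss : ∀ τ ∈ D', τ ⊂ s := fun τ hτ =>
    (hD's τ hτ).trans_ssubset (filter_ssubset.2 ⟨v₀, hv₀, by simp⟩)
  refine ⟨update g' s (f v₀ * #s), insert s D',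
    hg'.update_insert hs (by positivity) hD'ss,
    fun τ hτ => (mem_insert.1 hτ).elim (·.le) fun h => (hD'ss τ h).subset, ?_⟩
  rw [sum_insert_update_smul (fun h => (hD'ss s h).ne rfl), hsum',
    smul_barycenter_eq_indicator hs, add_sub_cancel]

end ChainWeights

section Subdivision

variable {K : Set (Finset V)} (hK : IsSimplicialComplex K)
include hK

lemma exists_isChainWeight (p : Realization (sd K)) :
    ∃ D ∈ sd K, IsChainWeight p.toFun D ∧ p ∈ simplexSet (sd K) D := by
  obtain ⟨C, hC, hp⟩ := p.mem
  have hDC := coe_subset.2 (filter_subset (p.toFun · ≠ 0) C)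
  have hpD := mem_simplexCarrier_filter_ne_zero hp
  exact ⟨_, ⟨nonempty_of_mem_simplexCarrier hpD, hDC.trans hC.2.1, hC.2.2.mono hDC⟩,
    ⟨hp.1, ne_zero_iff_of_mem_simplexCarrier hp, fun τ hτ => hK.nonempty τ (hC.2.1 (hDC hτ)),
      hC.2.2.mono hDC⟩, hpD⟩

lemma baryMap_toFun_eq_sum {p : Realization (sd K)} {D : Finset (Finset V)}
    (hD : IsChainWeight p.toFun D) :
    (baryMap hK p).toFun = ∑ τ ∈ D, p.toFun τ • barycenter τ :=
  affineExtend_eq_sum hD.support_subset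

lemma continuous_baryMap : Continuous (baryMap hK) :=
  continuous_affineMap

lemma injective_baryMap : Injective (baryMap hK) := fun p q hpq => by
  obtain ⟨D, -, hD, -⟩ := exists_isChainWeight hK p
  obtain ⟨D', -, hD', -⟩ := exists_isChainWeight hK q
  exact Realization.ext <| hD.eq_of_sum_eq hD' <| by
    rw [← baryMap_toFun_eq_sum hK hD, ← baryMap_toFun_eq_sum hK hD', hpq]

lemma surjective_baryMap : Surjective (baryMap hK) := fun q => by
  obtain ⟨σ, hσ, hq⟩ := q.mem
  obtain ⟨g, D, hg, hDs, hsum⟩ :=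
    exists_isChainWeight_sum_eq _ hq.1 (ne_zero_iff_of_mem_simplexCarrier hq)
  have hDσ : ∀ τ ∈ D, τ ⊆ σ := fun τ hτ => (hDs τ hτ).trans (filter_subset _ σ)
  have hmass : ∑ τ ∈ D, g τ = 1 := by
    calc ∑ τ ∈ D, g τ
        = ∑ τ ∈ D, g τ * ∑ v ∈ σ, barycenter τ v := sum_congr rfl fun τ hτ => by
          rw [(simplexCarrier_mono (hDσ τ hτ)
            (barycenter_mem_simplexCarrier (hg.nonempty τ hτ))).2.2, mul_one]
      _ = ∑ v ∈ σ, q.toFun v := by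
          simp_rw [mul_sum, ← hsum, Finset.sum_apply, Pi.smul_apply, smul_eq_mul]
          exact sum_comm
      _ = 1 := hq.2.2
  have hgD : g ∈ simplexCarrier D := ⟨hg.nonneg, fun τ => hg.eq_zero_of_notMem, hmass⟩
  have hD : D ∈ sd K := ⟨nonempty_of_mem_simplexCarrier hgD,
    fun τ hτ => hK.mem_of_subset σ hσ τ (hDσ τ hτ) (hg.nonempty τ hτ), hg.isChain⟩
  exact ⟨⟨g, D, hD, hgD⟩, Realization.ext ((baryMap_toFun_eq_sum hK hg).trans hsum)⟩

/-- A point of `sd K` over the simplex `τ` lies in a simplex of `sd K` spanned by faces of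
`τ`, and there are finitely many of those. -/
lemma isCompact_preimage_baryMap {τ : Finset V} :
    IsCompact (baryMap hK ⁻¹' simplexSet K τ) := by
  classical
  refine ((τ.powerset.powerset.filter (· ∈ sd K)).isCompact_biUnion fun D hD =>
    isCompact_simplexSet (mem_filter.1 hD).2).of_isClosed_subset
    ((isClosed_simplexSet K τ).preimage (continuous_baryMap hK)) fun p hp => ?_
  obtain ⟨D, hD, hpD, hpDs⟩ := exists_isChainWeight hK p
  have hDτ : ∀ ρ ∈ D, ρ ⊆ τ := fun ρ hρ v hv => by_contra fun hvτ =>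
    (hpD.sum_pos hρ hv).ne' (baryMap_toFun_eq_sum hK hpD ▸ hp.2.1 v hvτ)
  exact mem_iUnion₂.2 ⟨D, mem_filter.2 ⟨mem_powerset.2 fun ρ hρ =>
    mem_powerset.2 (hDτ ρ hρ), hD⟩, hpDs⟩

def sdHomeomorph : Realization (sd K) ≃ₜ Realization K :=
  (Equiv.ofBijective _ ⟨injective_baryMap hK, surjective_baryMap hK⟩)
    |>.toHomeomorphOfContinuousClosed (continuous_baryMap hK) <|
      isClosedMap_of_isCompact_preimage_simplexSet (continuous_baryMap hK) fun _ _ =>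
        isCompact_preimage_baryMap hK

@[simp] lemma coe_sdHomeomorph : ⇑(sdHomeomorph hK) = baryMap hK := rfl

end Subdivision

lemma IsSimplicialMap.sd [DecidableEq W] {K : Set (Finset V)} {L : Set (Finset W)} {h : V → W}
    (hh : IsSimplicialMap K L h) : IsSimplicialMap (sd K) (sd L) (image h) := fun S hS =>
  ⟨hS.1.image _, fun _ hρ => by
    obtain ⟨C, hC, rfl⟩ := mem_image.1 (mem_coe.1 hρ)
    exact hh C (hS.2.1 hC), by
    rw [coe_image]
    exact hS.2.2.image_of_map_rel (α := Finset V) (β := Finset W) (· ⊆ ·) (· ⊆ ·) _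
      fun _ _ => image_subset_image⟩

/-- Both composites carry a chain into the image of its largest simplex. -/
lemma fnHomotopic_vertexMap_comp_baryMap [DecidableEq W] {K : Set (Finset V)}
    {L : Set (Finset W)} (hK : IsSimplicialComplex K) (hL : IsSimplicialComplex L) {h : V → W}
    (hh : IsSimplicialMap K L h) :
    FnHomotopic (vertexMap h hh ∘ baryMap hK) (baryMap hL ∘ vertexMap (image h) hh.sd) := by
  refine fnHomotopic_of_forall_mem_simplexSet (continuous_vertexMap.comp (continuous_baryMap hK))
    ((continuous_baryMap hL).comp continuous_vertexMap) fun S hS => ?_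
  obtain ⟨M, hM, hmax⟩ := exists_greatest_of_isChain hS.1 hS.2.2
  refine ⟨M.image h, hh M (hS.2.1 hM), fun p hp => ⟨?_, ?_⟩⟩
  · exact vertexMap_mem_simplexSet
      (baryMap_mem_simplexSet hK hp (barycenter_mem_of_mem_sd hK hS hmax))
      fun v hv => mem_image_of_mem h hv
  · refine baryMap_mem_simplexSet hL
      (vertexMap_mem_simplexSet hp fun C hC => mem_image_of_mem _ hC) fun ρ hρ => ?_
    obtain ⟨C, hC, rfl⟩ := mem_image.1 hρ
    exact simplexCarrier_mono (image_subset_image (hmax C hC))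
      (barycenter_mem_simplexCarrier ((hK.nonempty C (hS.2.1 hC)).image h))

lemma apply_mem_of_forall_subset {K : Set (Finset V)} {c : Finset (Finset V) → V}
    (hc : ∀ C ∈ sd K, ∀ σ ∈ C, c C ∈ σ) {S : Finset (Finset (Finset V))} (hS : S ∈ sd (sd K))
    {σ : Finset V} (hSσ : ∀ C ∈ S, ∀ ρ ∈ C, ρ ⊆ σ) : ∀ C ∈ S, c C ∈ σ := fun C hC =>
  let ⟨ρ, hρ⟩ := (hS.2.1 hC).1
  hSσ C hC ρ hρ (hc C (hS.2.1 hC) ρ hρ)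

lemma isSimplicialMap_of_forall_mem [DecidableEq V] {K : Set (Finset V)}
    (hK : IsSimplicialComplex K) {c : Finset (Finset V) → V}
    (hc : ∀ C ∈ sd K, ∀ σ ∈ C, c C ∈ σ) : IsSimplicialMap (sd (sd K)) K c := fun S hS => by
  obtain ⟨M, hM, hmax⟩ := exists_greatest_of_isChain hS.1 hS.2.2
  obtain ⟨σ, hσ, hσmax⟩ := exists_greatest_of_isChain (hS.2.1 hM).1 (hS.2.1 hM).2.2
  refine hK.mem_of_subset σ ((hS.2.1 hM).2.1 hσ) _ (fun a ha => ?_) (hS.1.image c)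
  obtain ⟨C, hC, rfl⟩ := mem_image.1 ha
  exact apply_mem_of_forall_subset hc hS (fun C hC ρ hρ => hσmax ρ (hmax C hC hρ)) C hC

lemma fnHomotopic_vertexMap_baryMap_comp_baryMap [DecidableEq V] {K : Set (Finset V)}
    (hK : IsSimplicialComplex K) {c : Finset (Finset V) → V}
    (hc : ∀ C ∈ sd K, ∀ σ ∈ C, c C ∈ σ) :
    FnHomotopic (vertexMap c (isSimplicialMap_of_forall_mem hK hc))
      (baryMap hK ∘ baryMap (isSimplicialComplex_sd K)) := by
  refine fnHomotopic_of_forall_mem_simplexSet continuous_vertexMap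
    ((continuous_baryMap hK).comp (continuous_baryMap _)) fun S hS => ?_
  obtain ⟨M, hM, hmax⟩ := exists_greatest_of_isChain hS.1 hS.2.2
  obtain ⟨σ, hσ, hσmax⟩ := exists_greatest_of_isChain (hS.2.1 hM).1 (hS.2.1 hM).2.2
  refine ⟨σ, (hS.2.1 hM).2.1 hσ, fun p hp =>
    ⟨vertexMap_mem_simplexSet hp
      (apply_mem_of_forall_subset hc hS fun C hC ρ hρ => hσmax ρ (hmax C hC hρ)), ?_⟩⟩
  exact baryMap_mem_simplexSet hK
    (baryMap_mem_simplexSet _ hp (barycenter_mem_of_mem_sd (isSimplicialComplex_sd K) hS hmax))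
    (barycenter_mem_of_mem_sd hK (hS.2.1 hM) hσmax)

section Dowker

variable {R : V → W → Prop}

def dowkerComplex (R : V → W → Prop) : Set (Finset V) :=
  {σ | σ.Nonempty ∧ ∃ b, ∀ a ∈ σ, R a b}

lemma isSimplicialComplex_dowkerComplex (R : V → W → Prop) :
    IsSimplicialComplex (dowkerComplex R) where
  nonempty _ hσ := hσ.1
  mem_of_subset _ hσ _ hτσ hτ :=
    let ⟨b, hb⟩ := hσ.2
    ⟨hτ, b, fun a ha => hb a (hτσ ha)⟩

lemma dowkerComplex_eq_empty (hR : ∀ a b, ¬R a b) : dowkerComplex R = ∅ :=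
  eq_empty_of_forall_notMem fun _ ⟨⟨a, ha⟩, b, hb⟩ => hR a b (hb a ha)

lemma exists_witness (R : V → W → Prop) [Nonempty W] :
    ∃ w : Finset V → W, ∀ σ ∈ dowkerComplex R, ∀ a ∈ σ, R a (w σ) := by
  classical
  exact ⟨fun σ => if hσ : σ ∈ dowkerComplex R then hσ.2.choose else Classical.arbitrary W,
    fun σ hσ => by simpa only [dif_pos hσ] using hσ.2.choose_spec⟩

lemma exists_common_vertex (K : Set (Finset V)) (hK : IsSimplicialComplex K) [Nonempty V] :
    ∃ c : Finset (Finset V) → V, ∀ C ∈ sd K, ∀ σ ∈ C, c C ∈ σ := by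
  classical
  refine ⟨fun C => if h : ∃ a, ∀ σ ∈ C, a ∈ σ then h.choose else Classical.arbitrary V,
    fun C hC => ?_⟩
  obtain ⟨m, hm, hmin⟩ := exists_least_of_isChain hC.1 hC.2.2
  obtain ⟨a, ha⟩ := hK.nonempty m (hC.2.1 hm)
  have h : ∃ a, ∀ σ ∈ C, a ∈ σ := ⟨a, fun σ hσ => hmin σ hσ ha⟩
  simpa only [dif_pos h] using h.choose_spec

variable [DecidableEq W] {w : Finset V → W}

lemma isSimplicialMap_witness (hw : ∀ σ ∈ dowkerComplex R, ∀ a ∈ σ, R a (w σ)) :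
    IsSimplicialMap (sd (dowkerComplex R)) (dowkerComplex (flip R)) w := fun C hC => by
  obtain ⟨m, hm, hmin⟩ := exists_least_of_isChain hC.1 hC.2.2
  obtain ⟨a, ha⟩ := (hC.2.1 hm).1
  refine ⟨hC.1.image w, a, fun b hb => ?_⟩
  obtain ⟨σ, hσ, rfl⟩ := mem_image.1 hb
  exact hw σ (hC.2.1 hσ) a (hmin σ hσ ha)

def dowkerMap (hw : ∀ σ ∈ dowkerComplex R, ∀ a ∈ σ, R a (w σ)) :
    Realization (dowkerComplex R) → Realization (dowkerComplex (flip R)) :=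
  vertexMap w (isSimplicialMap_witness hw) ∘
    (sdHomeomorph (isSimplicialComplex_dowkerComplex R)).symm

lemma continuous_dowkerMap (hw : ∀ σ ∈ dowkerComplex R, ∀ a ∈ σ, R a (w σ)) :
    Continuous (dowkerMap hw) :=
  continuous_vertexMap.comp (Homeomorph.continuous _)

variable [DecidableEq V] {w' : Finset W → V} {c : Finset (Finset V) → V}

/-- Everything over a chain of chains is related to the witness of the least simplex occurring
in it, so both maps carry it into one simplex of `dowkerComplex R`. -/
lemma fnHomotopic_vertexMap_witness_comp
    (hw : ∀ σ ∈ dowkerComplex R, ∀ a ∈ σ, R a (w σ))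
    (hw' : ∀ τ ∈ dowkerComplex (flip R), ∀ b ∈ τ, flip R b (w' τ))
    (hc : ∀ C ∈ sd (dowkerComplex R), ∀ σ ∈ C, c C ∈ σ) :
    FnHomotopic (vertexMap w' (isSimplicialMap_witness hw') ∘
        vertexMap (image w) (isSimplicialMap_witness hw).sd)
      (vertexMap c (isSimplicialMap_of_forall_mem (isSimplicialComplex_dowkerComplex R) hc)) := by
  refine fnHomotopic_of_forall_mem_simplexSet (continuous_vertexMap.comp continuous_vertexMap)
    continuous_vertexMap fun S hS => ?_
  obtain ⟨C₀, hC₀, hC₀min⟩ := exists_least_of_isChain hS.1 hS.2.2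
  obtain ⟨μ, hμ, hμmin⟩ := exists_least_of_isChain (hS.2.1 hC₀).1 (hS.2.1 hC₀).2.2
  have hμC : ∀ C ∈ S, μ ∈ C := fun C hC => hC₀min C hC hμ
  have hμK : μ ∈ dowkerComplex R := (hS.2.1 hC₀).2.1 hμ
  refine ⟨S.image (w' ∘ image w) ∪ S.image c, ⟨(hS.1.image _).mono subset_union_left,
    w μ, fun a ha => ?_⟩, fun p hp => ⟨?_, ?_⟩⟩
  · rcases mem_union.1 ha with ha | ha <;> obtain ⟨C, hC, rfl⟩ := mem_image.1 ha
    · exact hw' _ (isSimplicialMap_witness hw C (hS.2.1 hC)) _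
        (mem_image_of_mem w (hμC C hC))
    · exact hw μ hμK _ (hc C (hS.2.1 hC) μ (hμC C hC))
  · refine vertexMap_mem_simplexSet
      (vertexMap_mem_simplexSet hp fun C hC => mem_image_of_mem _ hC) fun ρ hρ => ?_
    obtain ⟨C, hC, rfl⟩ := mem_image.1 hρ
    exact mem_union_left _ (mem_image_of_mem (w' ∘ image w) hC)
  · exact vertexMap_mem_simplexSet hp fun C hC => mem_union_right _ (mem_image_of_mem c hC)

theorem fnHomotopic_dowkerMap_comp_dowkerMap [Nonempty V]
    (hw : ∀ σ ∈ dowkerComplex R, ∀ a ∈ σ, R a (w σ))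
    (hw' : ∀ τ ∈ dowkerComplex (flip R), ∀ b ∈ τ, flip R b (w' τ)) :
    FnHomotopic (dowkerMap hw' ∘ dowkerMap hw) id := by
  have hK := isSimplicialComplex_dowkerComplex R
  have hsdK := isSimplicialComplex_sd (dowkerComplex R)
  obtain ⟨c, hc⟩ := exists_common_vertex _ hK
  refine FnHomotopic.of_comp_homeomorph ((sdHomeomorph hsdK).trans (sdHomeomorph hK)) ?_
  have hnat : FnHomotopic ((dowkerMap hw' ∘ dowkerMap hw) ∘ baryMap hK ∘ baryMap hsdK)
      (vertexMap w' (isSimplicialMap_witness hw') ∘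
        vertexMap (image w) (isSimplicialMap_witness hw).sd) := by
    convert (fnHomotopic_vertexMap_comp_baryMap hsdK (isSimplicialComplex_dowkerComplex _)
      (isSimplicialMap_witness hw)).comp_left (continuous_dowkerMap hw') using 1 <;>
    · funext p
      simp [dowkerMap, ← coe_sdHomeomorph]
  exact hnat.trans ((fnHomotopic_vertexMap_witness_comp hw hw' hc).trans
    (fnHomotopic_vertexMap_baryMap_comp_baryMap hK hc))

end Dowker

theorem homotopyEquivalent_dowkerComplex (R : V → W → Prop) :
    HomotopyEquivalent (Realization (dowkerComplex R))
      (Realization (dowkerComplex (flip R))) := by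
  classical
  by_cases hR : ∃ a b, R a b
  · obtain ⟨a, b, -⟩ := hR
    have : Nonempty V := ⟨a⟩
    have : Nonempty W := ⟨b⟩
    obtain ⟨w, hw⟩ := exists_witness R
    obtain ⟨w', hw'⟩ := exists_witness (flip R)
    exact IsHotEquiv.homotopyEquivalent ⟨continuous_dowkerMap hw, dowkerMap hw',
      continuous_dowkerMap hw', fnHomotopic_dowkerMap_comp_dowkerMap hw hw',
      fnHomotopic_dowkerMap_comp_dowkerMap hw' hw⟩
  · simp only [not_exists] at hR
    have := Realization.isEmpty_of_eq_empty (dowkerComplex_eq_empty hR)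
    have := Realization.isEmpty_of_eq_empty
      (dowkerComplex_eq_empty (R := flip R) fun b a => hR a b)
    exact ⟨Homeomorph.empty.toHomotopyEquiv⟩

theorem homotopyEquivalent_vietoris_nerve {X : Type*} (𝒰 : Set (Set X)) :
    HomotopyEquivalent (Realization (vietoris 𝒰)) (Realization (nerve 𝒰)) := by
  let R (x : X) (U : Set X) : Prop := U ∈ 𝒰 ∧ x ∈ U
  have hV : vietoris 𝒰 = dowkerComplex R := Set.ext fun σ =>
    ⟨fun ⟨hσ, U, hU, hσU⟩ => ⟨hσ, U, fun x hx => ⟨hU, hσU hx⟩⟩,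
      fun ⟨⟨x, hx⟩, U, hU⟩ => ⟨⟨x, hx⟩, U, (hU x hx).1, fun y hy => (hU y hy).2⟩⟩
  have hN : nerve 𝒰 = dowkerComplex (flip R) := Set.ext fun τ => by
    simp only [nerve, dowkerComplex, flip, R, Set.nonempty_def, Set.mem_iInter₂]
    exact ⟨fun ⟨hτ, h𝒰, x, hx⟩ => ⟨hτ, x, fun U hU => ⟨h𝒰 hU, hx U hU⟩⟩,
      fun ⟨hτ, x, hx⟩ => ⟨hτ, fun U hU => (hx U hU).1, x, fun U hU => (hx U hU).2⟩⟩
  rw [hV, hN]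
  exact homotopyEquivalent_dowkerComplex R

theorem ripsClosed_homotopyEquivalent_nerve_general {X : Type u} [MetricSpace X] (r : ℝ)
    (𝒰' : Set (Set X))
    (h𝒰' : ∀ σ : Finset X, σ.Nonempty →
      ((∃ U ∈ 𝒰', ↑σ ⊆ U) ↔ Metric.diam (σ : Set X) ≤ r)) :
    HomotopyEquivalent (Realization (ripsClosed X r)) (Realization (nerve 𝒰')) := by
  have hRips : ripsClosed X r = vietoris 𝒰' := Set.ext fun σ =>
    and_congr_right fun hσ => (h𝒰' σ hσ).symm
  rw [hRips]
  exact homotopyEquivalent_vietoris_nerve 𝒰'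

/-- Closed Rips complex as a nerve: if `𝒰'` is a cover of a metric
space `X` such that a finite subset of `X` is contained in some element of `𝒰'` iff its
diameter is at most `r`, then `Rips̄(X,r)` is homotopy equivalent to the nerve `N(𝒰')`. -/
theorem ripsClosed_homotopyEquivalent_nerve {X : Type u} [MetricSpace X] (r : ℝ)
    (hr : 0 < r) (𝒰' : Set (Set X)) (hcov : IsCover 𝒰')
    (h𝒰' : ∀ σ : Finset X, σ.Nonempty →
      ((∃ U ∈ 𝒰', ↑σ ⊆ U) ↔ Metric.diam (σ : Set X) ≤ r)) :
    HomotopyEquivalent (Realization (ripsClosed X r)) (Realization (nerve 𝒰')) :=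
  ripsClosed_homotopyEquivalent_nerve_general r 𝒰' h𝒰'

end RipsPaper
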